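/- For the metric g_{αβ} = fΠ⊥_{αβ} + gΠ∥_{αβ}, the scalar curvature equals R = (n−1)[((n−2)/(fs))((f+f′s)²/(fg) − 1) + 4(f+f′s)′/(fg) − 2(f′/f + g′/g)(f+f′s)/(fg)], obtained by contracting the Ricci tensor with the inverse metric g^{αβ} = (1/f)Π⊥^{αβ} + (1/g)Π∥^{αβ}. -/
import Mathlib


noncomputable section
open Matrix BigOperators Real Filter Topology

/-- Minkowski metric diag(+1, -1, ..., -1) on `ℝⁿ`. -/
def eta (n : ℕ) : Matrix (Fin n) (Fin n) ℝ :=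
  Matrix.diagonal (fun i => if (i : ℕ) = 0 then 1 else -1)

/-- `s = xᵀ η x`. -/
def sfun {n : ℕ} (x : Fin n → ℝ) : ℝ := x ⬝ᵥ (eta n).mulVec x

/-- Lowered vector `x_α = η_{αβ} x^β`. -/
def xlow {n : ℕ} (x : Fin n → ℝ) : Fin n → ℝ := (eta n).mulVec x

/-- Transverse projector `Π⊥_{αβ} = η_{αβ} - x_α x_β / s`. -/
def Pperp {n : ℕ} (x : Fin n → ℝ) : Matrix (Fin n) (Fin n) ℝ :=
  fun α β => eta n α β - xlow x α * xlow x β / sfun x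

/-- Longitudinal projector `Π∥_{αβ} = x_α x_β / s`. -/
def Ppar {n : ℕ} (x : Fin n → ℝ) : Matrix (Fin n) (Fin n) ℝ :=
  fun α β => xlow x α * xlow x β / sfun x

/-- The Lorentz invariant metric `g_{αβ} = f(s) Π⊥_{αβ} + g(s) Π∥_{αβ}`. -/
def Gfield {n : ℕ} (f g : ℝ → ℝ) (x : Fin n → ℝ) : Matrix (Fin n) (Fin n) ℝ :=
  f (sfun x) • Pperp x + g (sfun x) • Ppar x

/-- The inverse metric `g^{αβ} = (1/f) Π⊥^{αβ} + (1/g) Π∥^{αβ}`. -/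
def Ginvfield {n : ℕ} (f g : ℝ → ℝ) (x : Fin n → ℝ) : Matrix (Fin n) (Fin n) ℝ :=
  (1 / f (sfun x)) • ((eta n)⁻¹ * Pperp x * (eta n)⁻¹)
    + (1 / g (sfun x)) • ((eta n)⁻¹ * Ppar x * (eta n)⁻¹)

/-- Coefficient of `Π⊥_{αβ}` in the Ricci tensor (14) of the paper. -/
def RicPerp (n : ℕ) (f g : ℝ → ℝ) (t : ℝ) : ℝ :=
  ((n : ℝ) - 2) / t * ((f t + deriv f t * t) ^ 2 / (f t * g t) - 1)
    + 2 * deriv (fun u => f u + deriv f u * u) t / g t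
    - (deriv f t / f t + deriv g t / g t) * (f t + deriv f t * t) / g t

/-- Coefficient of `Π∥_{αβ}` in the Ricci tensor (14) of the paper. -/
def RicPar (n : ℕ) (f g : ℝ → ℝ) (t : ℝ) : ℝ :=
  ((n : ℝ) - 1) * (2 * deriv (fun u => f u + deriv f u * u) t / f t
    - (deriv f t / f t + deriv g t / g t) * (f t + deriv f t * t) / f t)

/-- Ricci tensor of the Lorentz invariant metric `g_{αβ} = fΠ⊥ + gΠ∥`. -/
def RicciField {n : ℕ} (f g : ℝ → ℝ) (x : Fin n → ℝ) (α β : Fin n) : ℝ :=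
  RicPerp n f g (sfun x) * Pperp x α β + RicPar n f g (sfun x) * Ppar x α β

def dd (n : ℕ) : Fin n → ℝ := fun i => if (i : ℕ) = 0 then 1 else -1

lemma eta_eq (n : ℕ) : eta n = Matrix.diagonal (dd n) := rfl

lemma dd_sq (n : ℕ) (i : Fin n) : dd n i * dd n i = 1 := by
  unfold dd; split <;> norm_num

lemma eta_inv (n : ℕ) : (eta n)⁻¹ = eta n := by
  apply Matrix.inv_eq_right_inv
  rw [eta_eq, Matrix.diagonal_mul_diagonal]
  have h : (fun i => dd n i * dd n i) = fun _ : Fin n => (1 : ℝ) := funext (dd_sq n)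
  rw [h, Matrix.diagonal_one]

lemma xlow_eq {n : ℕ} (x : Fin n → ℝ) (α : Fin n) : xlow x α = dd n α * x α := by
  simp [xlow, eta_eq, Matrix.mulVec_diagonal]

lemma dd_xlow {n : ℕ} (x : Fin n → ℝ) (α : Fin n) : dd n α * xlow x α = x α := by
  rw [xlow_eq, ← mul_assoc, dd_sq, one_mul]

lemma eta_diag {n : ℕ} (α : Fin n) : eta n α α = dd n α := by
  simp [eta_eq, Matrix.diagonal_apply]

lemma sum_sfun {n : ℕ} (x : Fin n → ℝ) : ∑ α, x α * xlow x α = sfun x := rfl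

lemma sum_q {n : ℕ} (x : Fin n → ℝ) (hs : sfun x ≠ 0) :
    ∑ α, x α * xlow x α / sfun x = 1 := by
  rw [← Finset.sum_div, sum_sfun, div_self hs]

lemma eta_sum {n : ℕ} (α : Fin n) (h : Fin n → ℝ) :
    ∑ β, eta n α β * h β = dd n α * h α := by
  simp [eta_eq, Matrix.diagonal_apply, ite_mul, Finset.sum_ite_eq]

lemma entry_perp {n : ℕ} (x : Fin n → ℝ) (α β : Fin n) :
    (eta n * Pperp x * eta n) α β = eta n α β - x α * x β / sfun x := by
  rw [eta_eq, Matrix.mul_diagonal, Matrix.diagonal_mul, ← eta_eq]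
  show dd n α * Pperp x α β * dd n β = _
  simp only [Pperp]
  have h : dd n α * (eta n α β - xlow x α * xlow x β / sfun x) * dd n β
      = dd n α * eta n α β * dd n β
        - (dd n α * xlow x α) * (dd n β * xlow x β) / sfun x := by ring
  rw [h, dd_xlow, dd_xlow]
  congr 1
  rw [eta_eq, Matrix.diagonal_apply]
  split
  · rename_i hab; subst hab; rw [dd_sq, one_mul]
  · ring

lemma entry_par {n : ℕ} (x : Fin n → ℝ) (α β : Fin n) :
    (eta n * Ppar x * eta n) α β = x α * x β / sfun x := by
  rw [eta_eq, Matrix.mul_diagonal, Matrix.diagonal_mul]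
  simp only [Ppar]
  have h : dd n α * (xlow x α * xlow x β / sfun x) * dd n β
      = (dd n α * xlow x α) * (dd n β * xlow x β) / sfun x := by ring
  rw [h, dd_xlow, dd_xlow]

lemma sumPP {n : ℕ} (x : Fin n → ℝ) (hs : sfun x ≠ 0) :
    ∑ α, ∑ β, (eta n α β - x α * x β / sfun x) * Pperp x α β = (n : ℝ) - 1 := by
  have inner : ∀ α : Fin n, ∑ β, (eta n α β - x α * x β / sfun x) * Pperp x α β
      = 1 - x α * xlow x α / sfun x := by
    intro α
    have expand : ∀ β : Fin n, (eta n α β - x α * x β / sfun x) * Pperp x α β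
        = eta n α β * eta n α β - eta n α β * (xlow x α * xlow x β / sfun x)
          - eta n α β * (x α * x β / sfun x)
          + (x α * xlow x α / sfun x) * (x β * xlow x β / sfun x) := by
      intro β; simp only [Pperp]; ring
    simp only [expand]
    rw [Finset.sum_add_distrib, Finset.sum_sub_distrib, Finset.sum_sub_distrib,
      eta_sum α (fun β => eta n α β), eta_sum α (fun β => xlow x α * xlow x β / sfun x),
      eta_sum α (fun β => x α * x β / sfun x), ← Finset.mul_sum, sum_q x hs, eta_diag]
    have h1 : dd n α * (xlow x α * xlow x α / sfun x) = x α * xlow x α / sfun x := by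
      rw [show dd n α * (xlow x α * xlow x α / sfun x)
          = (dd n α * xlow x α) * xlow x α / sfun x from by ring, dd_xlow]
    have h2 : dd n α * (x α * x α / sfun x) = x α * xlow x α / sfun x := by
      rw [show dd n α * (x α * x α / sfun x) = x α * (dd n α * x α) / sfun x from by ring,
        ← xlow_eq]
    rw [h1, h2, dd_sq, mul_one]; ring
  simp only [inner]
  rw [Finset.sum_sub_distrib, sum_q x hs, Finset.sum_const, Finset.card_univ]
  simp

lemma sumPQ {n : ℕ} (x : Fin n → ℝ) (hs : sfun x ≠ 0) :
    ∑ α, ∑ β, (eta n α β - x α * x β / sfun x) * Ppar x α β = 0 := by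
  have inner : ∀ α : Fin n, ∑ β, (eta n α β - x α * x β / sfun x) * Ppar x α β = 0 := by
    intro α
    have expand : ∀ β : Fin n, (eta n α β - x α * x β / sfun x) * Ppar x α β
        = eta n α β * (xlow x α * xlow x β / sfun x)
          - (x α * xlow x α / sfun x) * (x β * xlow x β / sfun x) := by
      intro β; simp only [Ppar]; ring
    simp only [expand]
    rw [Finset.sum_sub_distrib, eta_sum α (fun β => xlow x α * xlow x β / sfun x),
      ← Finset.mul_sum, sum_q x hs, mul_one,
      show dd n α * (xlow x α * xlow x α / sfun x)
        = (dd n α * xlow x α) * xlow x α / sfun x from by ring, dd_xlow, sub_self]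
  simp only [inner, Finset.sum_const_zero]

lemma sumQP {n : ℕ} (x : Fin n → ℝ) (hs : sfun x ≠ 0) :
    ∑ α, ∑ β, (x α * x β / sfun x) * Pperp x α β = 0 := by
  have inner : ∀ α : Fin n, ∑ β, (x α * x β / sfun x) * Pperp x α β = 0 := by
    intro α
    have expand : ∀ β : Fin n, (x α * x β / sfun x) * Pperp x α β
        = eta n α β * (x α * x β / sfun x)
          - (x α * xlow x α / sfun x) * (x β * xlow x β / sfun x) := by
      intro β; simp only [Pperp]; ring
    simp only [expand]
    rw [Finset.sum_sub_distrib, eta_sum α (fun β => x α * x β / sfun x),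
      ← Finset.mul_sum, sum_q x hs, mul_one,
      show dd n α * (x α * x α / sfun x) = x α * (dd n α * x α) / sfun x from by ring,
      ← xlow_eq, sub_self]
  simp only [inner, Finset.sum_const_zero]

lemma sumQQ {n : ℕ} (x : Fin n → ℝ) (hs : sfun x ≠ 0) :
    ∑ α, ∑ β, (x α * x β / sfun x) * Ppar x α β = 1 := by
  have inner : ∀ α : Fin n, ∑ β, (x α * x β / sfun x) * Ppar x α β
      = x α * xlow x α / sfun x := by
    intro α
    have expand : ∀ β : Fin n, (x α * x β / sfun x) * Ppar x α β
        = (x α * xlow x α / sfun x) * (x β * xlow x β / sfun x) := by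
      intro β; simp only [Ppar]; ring
    simp only [expand]
    rw [← Finset.mul_sum, sum_q x hs, mul_one]
  simp only [inner]
  exact sum_q x hs

lemma contract {n : ℕ} (x : Fin n → ℝ) (hs : sfun x ≠ 0) (A B C D : ℝ) :
    ∑ α, ∑ β, (A * (eta n α β - x α * x β / sfun x) + B * (x α * x β / sfun x))
        * (C * Pperp x α β + D * Ppar x α β)
      = A * C * ((n : ℝ) - 1) + B * D := by
  have expand : ∀ α β : Fin n,
      (A * (eta n α β - x α * x β / sfun x) + B * (x α * x β / sfun x))
        * (C * Pperp x α β + D * Ppar x α β)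
      = A * C * ((eta n α β - x α * x β / sfun x) * Pperp x α β)
        + A * D * ((eta n α β - x α * x β / sfun x) * Ppar x α β)
        + B * C * ((x α * x β / sfun x) * Pperp x α β)
        + B * D * ((x α * x β / sfun x) * Ppar x α β) := by
    intro α β; ring
  simp only [expand, Finset.sum_add_distrib, ← Finset.mul_sum]
  rw [sumPP x hs, sumPQ x hs, sumQP x hs, sumQQ x hs]
  ring

/-- Scalar curvature `R = g^{αβ} R_{αβ}` of the Lorentz invariant metric, eq. (15). -/
theorem lorentz_scalar_curvature {n : ℕ} (f g : ℝ → ℝ)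
    (hf : ContDiff ℝ (⊤ : ℕ∞) f) (hg : ContDiff ℝ (⊤ : ℕ∞) g)
    (hf0 : ∀ t, f t ≠ 0) (hg0 : ∀ t, g t ≠ 0)
    (x : Fin n → ℝ) (hs : sfun x ≠ 0) :
    ∑ α, ∑ β, Ginvfield f g x α β * RicciField f g x α β =
      ((n : ℝ) - 1) *
        (((n : ℝ) - 2) / (f (sfun x) * sfun x) *
            ((f (sfun x) + deriv f (sfun x) * sfun x) ^ 2 / (f (sfun x) * g (sfun x)) - 1)
          + 4 * deriv (fun u => f u + deriv f u * u) (sfun x) / (f (sfun x) * g (sfun x))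
          - 2 * (deriv f (sfun x) / f (sfun x) + deriv g (sfun x) / g (sfun x)) *
              (f (sfun x) + deriv f (sfun x) * sfun x) / (f (sfun x) * g (sfun x))) := by
  have hGinv : ∀ α β : Fin n, Ginvfield f g x α β
      = (1 / f (sfun x)) * (eta n α β - x α * x β / sfun x)
        + (1 / g (sfun x)) * (x α * x β / sfun x) := by
    intro α β
    simp only [Ginvfield, Matrix.add_apply, Matrix.smul_apply, smul_eq_mul, eta_inv,
      entry_perp, entry_par]
  have hRic : ∀ α β : Fin n, RicciField f g x α β
      = RicPerp n f g (sfun x) * Pperp x α β + RicPar n f g (sfun x) * Ppar x α β := by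
    intro α β; rfl
  simp only [hGinv, hRic]
  rw [contract x hs]
  simp only [RicPerp, RicPar]
  have hF := hf0 (sfun x)
  have hG := hg0 (sfun x)
  field_simp
  ring
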